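/- For every integer n ≥ 4 and every field F of characteristic zero, the span a of e_1, …, e_{n−1} is an abelian ideal of n_{n,1}, and every abelian ideal of n_{n,1} is contained in a; hence a is the unique maximal abelian ideal of n_{n,1}. -/

import Mathlib

/-!
The span `S` of `e₁, …, e_{n-1}` is abelian and, since `ad e_n` maps `S` into itself, an
ideal of codimension one. If `x = s + c e_n` lies in an abelian ideal `I` with `s ∈ S`, then
`⁅e_{n-1}, x⁆ = c e_{n-2}` lies in `I` as well, so
`0 = ⁅x, c e_{n-2}⁆ = -c² e_{n-3}`; hence `c = 0` and `x ∈ S`.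
-/

/-- The family `e 1, …, e n` is a basis of `L` realizing the Lie brackets of the
nilpotent Lie algebra `n_{n,1}`. -/
def IsNn1Basis (F : Type*) [Field F] (n : ℕ) {L : Type*} [LieRing L] [LieAlgebra F L]
    (e : ℕ → L) : Prop :=
  LinearIndependent F (fun i : Fin n => e (i.val + 1)) ∧
  Submodule.span F (Set.range (fun i : Fin n => e (i.val + 1))) = ⊤ ∧
  (∀ j k : ℕ, 1 ≤ j → j ≤ n - 1 → 1 ≤ k → k ≤ n - 1 → ⁅e j, e k⁆ = 0) ∧
  ⁅e 1, e n⁆ = 0 ∧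
  (∀ k : ℕ, 2 ≤ k → k ≤ n - 1 → ⁅e k, e n⁆ = e (k - 1))

section LieBracketSpan

variable {R L : Type*} [CommRing R] [LieRing L] [LieAlgebra R L]

theorem lie_mem_of_mem_span {s t : Set L} {T : Submodule R L}
    (h : ∀ a ∈ s, ∀ b ∈ t, ⁅a, b⁆ ∈ T) {x y : L}
    (hx : x ∈ Submodule.span R s) (hy : y ∈ Submodule.span R t) : ⁅x, y⁆ ∈ T := by
  let bracket : L →ₗ[R] L →ₗ[R] L := LinearMap.mk₂ R (⁅·, ·⁆) add_lie smul_lie lie_add lie_smul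
  have hle : Submodule.map₂ bracket (Submodule.span R s) (Submodule.span R t) ≤ T := by
    rw [Submodule.map₂_span_span, Submodule.span_le]
    rintro _ ⟨a, ha, b, hb, rfl⟩
    exact h a ha b hb
  exact hle (Submodule.apply_mem_map₂ bracket hx hy)

theorem lie_eq_zero_of_mem_span {s : Set L} (h : ∀ a ∈ s, ∀ b ∈ s, ⁅a, b⁆ = 0) {x y : L}
    (hx : x ∈ Submodule.span R s) (hy : y ∈ Submodule.span R s) : ⁅x, y⁆ = 0 :=
  (Submodule.mem_bot R).mp <|
    lie_mem_of_mem_span (fun a ha b hb => (Submodule.mem_bot R).mpr (h a ha b hb)) hx hy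

end LieBracketSpan

theorem LieIdeal.le_of_lie_eq_zero_of_sup_span_singleton_eq_top {R L : Type*} [CommRing R]
    [IsDomain R] [LieRing L] [LieAlgebra R L] [Module.IsTorsionFree R L] {S : Submodule R L}
    (hS : ∀ x ∈ S, ∀ y ∈ S, ⁅x, y⁆ = 0) {z u : L} (htop : S ⊔ R ∙ z = ⊤) (hu : u ∈ S)
    (huz : ⁅u, z⁆ ∈ S) (huzz : ⁅⁅u, z⁆, z⁆ ≠ 0) (I : LieIdeal R L)
    (hI : ∀ x ∈ I, ∀ y ∈ I, ⁅x, y⁆ = 0) : (I : Submodule R L) ≤ S := by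
  intro x hx
  obtain ⟨s, hs, _, hcz, rfl⟩ := Submodule.mem_sup.mp (htop ▸ Submodule.mem_top : x ∈ S ⊔ R ∙ z)
  obtain ⟨c, rfl⟩ := Submodule.mem_span_singleton.mp hcz
  have hux : ⁅u, s + c • z⁆ = c • ⁅u, z⁆ := by
    rw [lie_add, hS u hu s hs, lie_smul, zero_add]
  have hxv : ⁅s + c • z, c • ⁅u, z⁆⁆ = -((c * c) • ⁅⁅u, z⁆, z⁆) := by
    rw [add_lie, lie_smul, hS s hs _ huz, smul_zero, zero_add, smul_lie, lie_smul,
      ← lie_skew, smul_neg, smul_neg, smul_smul]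
  have hc : c * c = 0 := by
    have h0 := hI _ hx _ (hux ▸ I.lie_mem hx)
    rw [hxv, neg_eq_zero, smul_eq_zero] at h0
    exact h0.resolve_right huzz
  rw [mul_self_eq_zero.mp hc, zero_smul, add_zero]
  exact hs

theorem range_fin_succ_eq_image_Icc {α : Type*} (e : ℕ → α) (n : ℕ) :
    Set.range (fun i : Fin n => e (i.val + 1)) = e '' Set.Icc 1 n := by
  ext x
  constructor
  · rintro ⟨i, rfl⟩
    exact ⟨i.val + 1, ⟨by omega, i.isLt⟩, rfl⟩
  · rintro ⟨j, ⟨hj1, hjn⟩, rfl⟩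
    exact ⟨⟨j - 1, by omega⟩, by simp only [Nat.sub_add_cancel hj1]⟩

namespace IsNn1Basis

variable {F : Type*} [Field F] {n : ℕ} {L : Type*} [LieRing L] [LieAlgebra F L] {e : ℕ → L}

theorem lie_eq_zero (he : IsNn1Basis F n e) {j k : ℕ} (hj1 : 1 ≤ j) (hj : j ≤ n - 1)
    (hk1 : 1 ≤ k) (hk : k ≤ n - 1) : ⁅e j, e k⁆ = 0 :=
  he.2.2.1 j k hj1 hj hk1 hk

theorem lie_last {k : ℕ} (he : IsNn1Basis F n e) (hk2 : 2 ≤ k) (hk : k ≤ n - 1) :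
    ⁅e k, e n⁆ = e (k - 1) :=
  he.2.2.2.2 k hk2 hk

theorem lie_one_last (he : IsNn1Basis F n e) : ⁅e 1, e n⁆ = 0 :=
  he.2.2.2.1

theorem span_image_Icc_eq_top (he : IsNn1Basis F n e) :
    Submodule.span F (e '' Set.Icc 1 n) = ⊤ := by
  rw [← range_fin_succ_eq_image_Icc, he.2.1]

theorem ne_zero (he : IsNn1Basis F n e) {k : ℕ} (hk1 : 1 ≤ k) (hk : k ≤ n) : e k ≠ 0 := by
  simpa [Nat.sub_add_cancel hk1] using he.1.ne_zero ⟨k - 1, by omega⟩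

theorem span_Icc_sup_span_singleton_eq_top (he : IsNn1Basis F n e) (hn : 1 ≤ n) :
    Submodule.span F (e '' Set.Icc 1 (n - 1)) ⊔ F ∙ e n = ⊤ := by
  have hIcc : Set.Icc 1 n = insert n (Set.Icc 1 (n - 1)) := by
    ext j
    simp only [Set.mem_Icc, Set.mem_insert_iff]
    omega
  rw [sup_comm, ← Submodule.span_insert, ← Set.image_insert_eq, ← hIcc,
    he.span_image_Icc_eq_top]

theorem lie_mem_span_Icc (he : IsNn1Basis F n e) (x : L) {m : L}
    (hm : m ∈ Submodule.span F (e '' Set.Icc 1 (n - 1))) :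
    ⁅x, m⁆ ∈ Submodule.span F (e '' Set.Icc 1 (n - 1)) := by
  have hx : x ∈ Submodule.span F (e '' Set.Icc 1 n) := by
    rw [he.span_image_Icc_eq_top]
    exact Submodule.mem_top
  refine lie_mem_of_mem_span ?_ hx hm
  rintro _ ⟨j, ⟨hj1, hjn⟩, rfl⟩ _ ⟨k, ⟨hk1, hkn⟩, rfl⟩
  obtain hj | rfl := Nat.lt_or_eq_of_le hjn
  · rw [he.lie_eq_zero hj1 (by omega) hk1 hkn]
    exact Submodule.zero_mem _
  obtain rfl | hk := Nat.eq_or_lt_of_le hk1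
  · rw [← lie_skew, he.lie_one_last, neg_zero]
    exact Submodule.zero_mem _
  · rw [← lie_skew, he.lie_last hk hkn]
    exact Submodule.neg_mem _ (Submodule.subset_span ⟨k - 1, ⟨by omega, by omega⟩, rfl⟩)

theorem lie_eq_zero_of_mem_span_Icc (he : IsNn1Basis F n e) {x y : L}
    (hx : x ∈ Submodule.span F (e '' Set.Icc 1 (n - 1)))
    (hy : y ∈ Submodule.span F (e '' Set.Icc 1 (n - 1))) : ⁅x, y⁆ = 0 := by
  refine lie_eq_zero_of_mem_span ?_ hx hy
  rintro _ ⟨j, ⟨hj1, hj⟩, rfl⟩ _ ⟨k, ⟨hk1, hk⟩, rfl⟩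
  exact he.lie_eq_zero hj1 hj hk1 hk

end IsNn1Basis

theorem nn1_unique_maximal_abelian_ideal
    (F : Type*) [Field F] (n : ℕ) (hn : 4 ≤ n)
    (L : Type*) [LieRing L] [LieAlgebra F L] (e : ℕ → L)
    (he : IsNn1Basis F n e) :
    ∃ A : LieIdeal F L,
      ((A : Submodule F L) = Submodule.span F (e '' Set.Icc 1 (n - 1))) ∧
      (∀ x ∈ A, ∀ y ∈ A, ⁅x, y⁆ = 0) ∧
      (∀ I : LieIdeal F L, (∀ x ∈ I, ∀ y ∈ I, ⁅x, y⁆ = 0) →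
        (I : Submodule F L) ≤ (A : Submodule F L)) := by
  set S := Submodule.span F (e '' Set.Icc 1 (n - 1))
  have hmem : ∀ k, 1 ≤ k → k ≤ n - 1 → e k ∈ S := fun k hk1 hkn =>
    Submodule.subset_span ⟨k, ⟨hk1, hkn⟩, rfl⟩
  have habelian : ∀ x ∈ S, ∀ y ∈ S, ⁅x, y⁆ = 0 := fun x hx y hy =>
    he.lie_eq_zero_of_mem_span_Icc hx hy
  refine ⟨⟨S, fun {x _} hm => he.lie_mem_span_Icc x hm⟩, rfl, habelian, fun I hI => ?_⟩
  refine LieIdeal.le_of_lie_eq_zero_of_sup_span_singleton_eq_top habelian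
    (he.span_Icc_sup_span_singleton_eq_top (by omega)) (hmem (n - 1) (by omega) le_rfl)
    ?_ ?_ I hI
  · rw [he.lie_last (by omega) le_rfl]
    exact hmem (n - 2) (by omega) (by omega)
  · rw [he.lie_last (by omega) le_rfl, he.lie_last (by omega) (by omega)]
    exact he.ne_zero (by omega) (by omega)
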